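/- arXiv:2407.10003 — 5 statements merged into one kernel-verified Lean document; each statement's English description precedes it below -/
import Mathlib

section
/- Let f be a monotone submodular function, G ⊆ V a set, τ > 0, and S a set such that every element u ∈ S \ G satisfies (f(G ∪ {u}) - f(G))/w(u) < τ. Then f(S ∪ G) - f(G) ≤ τ · ∑_{u ∈ S \ G} w(u). -/
theorem stmt3 {V : Type*} [Fintype V] [DecidableEq V]
    (f : Finset V → ℝ)
    (hmono : ∀ A B : Finset V, A ⊆ B → f A ≤ f B)
    (hsub : ∀ A B : Finset V, f A + f B ≥ f (A ∪ B) + f (A ∩ B))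
    (w : V → ℝ) (hw : ∀ v, 0 < w v)
    (τ : ℝ) (hτ : 0 < τ)
    (G S : Finset V)
    (hdens : ∀ u ∈ S \ G, (f (insert u G) - f G) / w u < τ) :
    f (S ∪ G) - f G ≤ τ * ∑ u ∈ S \ G, w u := by
  have key : ∀ T : Finset V, f (G ∪ T) - f G ≤ ∑ u ∈ T, (f (insert u G) - f G) := by
    intro T
    induction T using Finset.induction_on with
    | empty => simp
    | insert a T ha ih =>
      have h1 := hsub (G ∪ T) (insert a G)
      have h2 : f G ≤ f ((G ∪ T) ∩ insert a G) := by
        apply hmono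
        intro x hx
        simp only [Finset.mem_inter, Finset.mem_union, Finset.mem_insert]
        exact ⟨Or.inl hx, Or.inr hx⟩
      have heq : (G ∪ T) ∪ insert a G = G ∪ insert a T := by
        ext x; simp [Finset.mem_union, Finset.mem_insert]; tauto
      rw [heq] at h1
      rw [Finset.sum_insert ha]
      linarith
  have h3 : S ∪ G = G ∪ (S \ G) := by
    ext x; simp [Finset.mem_union, Finset.mem_sdiff]; tauto
  rw [h3]
  calc f (G ∪ (S \ G)) - f G ≤ ∑ u ∈ S \ G, (f (insert u G) - f G) := key _
    _ ≤ ∑ u ∈ S \ G, τ * w u := by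
        apply Finset.sum_le_sum
        intro u hu
        have := hdens u hu
        rw [div_lt_iff₀ (hw u)] at this
        linarith
    _ = τ * ∑ u ∈ S \ G, w u := by rw [Finset.mul_sum]
end

section
/- Let f be monotone submodular with f(∅)=0, let S_opt ⊆ V be an optimal cover (f(S_opt) = f(V)) with cost OPT = ∑_{v ∈ S_opt} w(v), and let τ, ε > 0 satisfy τ ≤ f(V)·ε / OPT. Suppose G ⊆ V is a set such that every element u ∈ V \ G has marginal density (f(G∪{u}) - f(G))/w(u) < τ with respect to G. Then f(G) ≥ (1 - ε)·f(V). -/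
/-! Adding `Sopt` to `G` already reaches `f univ`, and by submodularity this gain is at most the
sum of the single-element gains `f (insert u G) - f G`, each of which is below `τ * w u`.
Hence `f univ - f G ≤ τ * OPT ≤ ε * f univ`. -/

lemma sub_le_sum_insert_sub {V : Type*} [DecidableEq V] (f : Finset V → ℝ)
    (hsub : ∀ A B : Finset V, f A + f B ≥ f (A ∪ B) + f (A ∩ B)) (G S : Finset V) :
    f (G ∪ S) - f G ≤ ∑ u ∈ S, (f (insert u G) - f G) := by
  induction S using Finset.induction with
  | empty => simp
  | @insert a S ha ih =>
    have hunion : insert a G ∪ (G ∪ S) = G ∪ insert a S := by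
      ext x; simp only [Finset.mem_union, Finset.mem_insert]; tauto
    have hinter : insert a G ∩ (G ∪ S) = G := by
      ext x; simp only [Finset.mem_inter, Finset.mem_insert, Finset.mem_union]
      constructor
      · rintro ⟨rfl | hx, hx' | hx'⟩ <;> first | assumption | exact absurd hx' ha
      · intro hx; exact ⟨Or.inr hx, Or.inl hx⟩
    have h := hsub (insert a G) (G ∪ S)
    rw [hunion, hinter] at h
    rw [Finset.sum_insert ha]
    linarith

lemma insert_sub_le_mul_of_density_lt {V : Type*} [Fintype V] [DecidableEq V]
    (f : Finset V → ℝ) (w : V → ℝ) (hw : ∀ v, 0 < w v) (τ : ℝ) (hτ : 0 ≤ τ) (G : Finset V)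
    (hdens : ∀ u ∈ Finset.univ \ G, (f (insert u G) - f G) / w u < τ) (u : V) :
    f (insert u G) - f G ≤ τ * w u := by
  by_cases hu : u ∈ G
  · rw [Finset.insert_eq_of_mem hu, sub_self]
    exact mul_nonneg hτ (hw u).le
  · exact ((div_lt_iff₀ (hw u)).mp (hdens u (by simp [hu]))).le

theorem stmt4_general {V : Type*} [Fintype V] [DecidableEq V]
    (f : Finset V → ℝ)
    (hmono : ∀ A B : Finset V, A ⊆ B → f A ≤ f B)
    (hsub : ∀ A B : Finset V, f A + f B ≥ f (A ∪ B) + f (A ∩ B))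
    (w : V → ℝ) (hw : ∀ v, 0 < w v)
    (ε : ℝ)
    (Sopt : Finset V) (hopt : f Sopt = f Finset.univ)
    (τ : ℝ) (hτ : 0 < τ)
    (hτle : τ ≤ f Finset.univ * ε / (∑ v ∈ Sopt, w v))
    (G : Finset V)
    (hdens : ∀ u ∈ Finset.univ \ G, (f (insert u G) - f G) / w u < τ) :
    f G ≥ (1 - ε) * f Finset.univ := by
  -- `OPT = 0` would make the right-hand side of `hτle` the junk value `x / 0 = 0`.
  have hOPT : 0 < ∑ v ∈ Sopt, w v := by
    refine (Finset.sum_nonneg fun v _ => (hw v).le).lt_of_ne fun h => ?_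
    rw [← h, div_zero] at hτle
    linarith
  have hgain : f Finset.univ - f G ≤ τ * ∑ v ∈ Sopt, w v :=
    calc f Finset.univ - f G = f Sopt - f G := by rw [hopt]
      _ ≤ f (G ∪ Sopt) - f G := by gcongr; exact hmono _ _ Finset.subset_union_right
      _ ≤ ∑ u ∈ Sopt, (f (insert u G) - f G) := sub_le_sum_insert_sub f hsub G Sopt
      _ ≤ ∑ u ∈ Sopt, τ * w u := Finset.sum_le_sum fun u _ =>
          insert_sub_le_mul_of_density_lt f w hw τ hτ.le G hdens u
      _ = τ * ∑ v ∈ Sopt, w v := (Finset.mul_sum _ _ _).symm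
  have := (le_div_iff₀ hOPT).mp hτle
  linarith

theorem stmt4 {V : Type*} [Fintype V] [DecidableEq V]
    (f : Finset V → ℝ)
    (hmono : ∀ A B : Finset V, A ⊆ B → f A ≤ f B)
    (hsub : ∀ A B : Finset V, f A + f B ≥ f (A ∪ B) + f (A ∩ B))
    (hnorm : f ∅ = 0)
    (w : V → ℝ) (hw : ∀ v, 0 < w v)
    (ε : ℝ) (hε : 0 < ε)
    (Sopt : Finset V) (hopt : f Sopt = f Finset.univ)
    (τ : ℝ) (hτ : 0 < τ)
    (hτle : τ ≤ f Finset.univ * ε / (∑ v ∈ Sopt, w v))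
    (G : Finset V)
    (hdens : ∀ u ∈ Finset.univ \ G, (f (insert u G) - f G) / w u < τ) :
    f G ≥ (1 - ε) * f Finset.univ :=
  stmt4_general f hmono hsub w hw ε Sopt hopt τ hτ hτle G hdens
end

section
/- Let f be a monotone submodular normalized function and G = {e₁, ..., e_k} a sequence of distinct elements where each element was added with marginal density at least τ > 0, i.e., (f({e₁,...,e_i}) - f({e₁,...,e_{i-1}}))/w(e_i) ≥ τ for all i. Then for any deletion set D ⊆ V, the cost of G \ D satisfies ∑_{e ∈ G \ D} w(e) ≤ f(G \ D)/τ, where the elements of G \ D are considered in the same order. -/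
theorem stmt5 {V : Type*} [Fintype V] [DecidableEq V]
    (f : Finset V → ℝ)
    (hmono : ∀ A B : Finset V, A ⊆ B → f A ≤ f B)
    (hsub : ∀ A B : Finset V, f A + f B ≥ f (A ∪ B) + f (A ∩ B))
    (hnorm : f ∅ = 0)
    (w : V → ℝ) (hw : ∀ v, 0 < w v)
    (τ : ℝ) (hτ : 0 < τ)
    (D : Finset V)
    (k : ℕ) (e : ℕ → V)
    (hinj : Set.InjOn e (Set.Iio k))
    (hdens : ∀ i < k,
      τ ≤ (f ((Finset.range (i + 1)).image e) - f ((Finset.range i).image e)) / w (e i)) :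
    ∑ i ∈ (Finset.range k).filter (fun i => e i ∉ D), w (e i) ≤
      f (((Finset.range k).image e) \ D) / τ := by
  set g : ℕ → ℝ := fun i => f (((Finset.range i).image e) \ D) with hg
  have key : ∀ i < k, (if e i ∉ D then τ * w (e i) else 0) ≤ g (i + 1) - g i := by
    intro i hik
    have hx : e i ∉ (Finset.range i).image e := by
      simp only [Finset.mem_image, Finset.mem_range, not_exists]
      rintro j ⟨hji, hje⟩
      exact absurd (hinj (lt_trans hji hik) hik hje) (Nat.ne_of_lt hji)
    have hsucc : (Finset.range (i + 1)).image e
        = insert (e i) ((Finset.range i).image e) := by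
      rw [Finset.range_add_one, Finset.image_insert]
    by_cases hd : e i ∈ D
    · simp only [hd, not_true, if_false]
      have : (Finset.range (i + 1)).image e \ D = (Finset.range i).image e \ D := by
        rw [hsucc, Finset.insert_sdiff_of_mem _ hd]
      simp [hg, this]
    · simp only [hd, not_false_iff, if_true]
      have hmarg : τ * w (e i) ≤
          f ((Finset.range (i + 1)).image e) - f ((Finset.range i).image e) := by
        have := hdens i hik
        rw [le_div_iff₀ (hw (e i))] at this
        linarith
      have hS : (Finset.range (i + 1)).image e \ D
          = insert (e i) ((Finset.range i).image e \ D) := by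
        rw [hsucc, Finset.insert_sdiff_of_notMem _ hd]
      have hsubm := hsub (insert (e i) ((Finset.range i).image e \ D))
        ((Finset.range i).image e)
      have hU : insert (e i) ((Finset.range i).image e \ D) ∪ (Finset.range i).image e
          = insert (e i) ((Finset.range i).image e) := by
        rw [Finset.insert_union, Finset.union_eq_right.mpr Finset.sdiff_subset]
      have hI : insert (e i) ((Finset.range i).image e \ D) ∩ (Finset.range i).image e
          = (Finset.range i).image e \ D := by
        rw [Finset.insert_inter_of_notMem hx]
        exact Finset.inter_eq_left.mpr (Finset.sdiff_subset)
      rw [hU, hI] at hsubm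
      rw [hsucc] at hmarg
      simp only [hg, hS, ← hsucc]
      linarith
  have hsum : ∑ i ∈ Finset.range k, (if e i ∉ D then τ * w (e i) else 0) ≤ g k - g 0 := by
    rw [← Finset.sum_range_sub g k]
    exact Finset.sum_le_sum fun i hi => key i (Finset.mem_range.mp hi)
  have hg0 : g 0 = 0 := by simp [hg, hnorm]
  rw [hg0, sub_zero] at hsum
  rw [le_div_iff₀ hτ, Finset.sum_mul, Finset.sum_filter]
  calc ∑ i ∈ Finset.range k, (if e i ∉ D then w (e i) * τ else 0)
      = ∑ i ∈ Finset.range k, (if e i ∉ D then τ * w (e i) else 0) := by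
        apply Finset.sum_congr rfl; intro i _; split <;> ring
    _ ≤ g k := hsum
end

section
/- Let f be monotone submodular normalized, w positive, τ > 0, ε > 0, D ⊆ V, and let G = {e₁,...,e_k} be a sequence where each e_i satisfies d(e_i | {e₁,...,e_{i-1}}) ≥ τ. Suppose τ ≤ f(V)·ε/OPT < (1+ε)τ where OPT is the cost of an optimal cover. Then ∑_{e ∈ G\D} w(e) < ((1+ε)/ε)·OPT. -/
/-!
Each element of the greedy sequence buys at least `τ` units of `f` per unit of weight, and the
gains telescope to `f(G) ≤ f(V)`, so the total weight of `G` is at most `f(V)/τ`. The choice of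
`τ` makes `f(V)/τ < (1 + ε) OPT / ε`.
-/

open Finset

lemma sum_range_le_sub_of_le_sub {a g : ℕ → ℝ} {k : ℕ}
    (h : ∀ i < k, a i ≤ g (i + 1) - g i) :
    ∑ i ∈ range k, a i ≤ g k - g 0 :=
  (sum_le_sum fun i hi => h i (mem_range.mp hi)).trans_eq (sum_range_sub g k)

lemma mul_sum_weight_le_of_marginal_density {V : Type*} [DecidableEq V]
    {f : Finset V → ℝ} (hnorm : f ∅ = 0) {w : V → ℝ} (hw : ∀ v, 0 < w v)
    {τ : ℝ} {k : ℕ} {e : ℕ → V}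
    (hdens : ∀ i < k,
      τ ≤ (f ((range (i + 1)).image e) - f ((range i).image e)) / w (e i)) :
    τ * ∑ i ∈ range k, w (e i) ≤ f ((range k).image e) := by
  have hgain : ∀ i < k,
      τ * w (e i) ≤ f ((range (i + 1)).image e) - f ((range i).image e) :=
    fun i hi => (le_div_iff₀ (hw (e i))).mp (hdens i hi)
  simpa [mul_sum, hnorm] using
    sum_range_le_sub_of_le_sub (g := fun i => f ((range i).image e)) hgain

lemma lt_div_mul_of_mul_le_of_mul_lt {W F τ ε OPT : ℝ} (hτ : 0 < τ) (hε : 0 < ε)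
    (hW : τ * W ≤ F) (hF : F * ε < (1 + ε) * τ * OPT) :
    W < (1 + ε) / ε * OPT := by
  have hεW : ε * W < (1 + ε) * OPT := by
    refine lt_of_mul_lt_mul_left ?_ hτ.le
    nlinarith
  rw [div_mul_eq_mul_div, lt_div_iff₀ hε]
  linarith

theorem stmt6_general {V : Type*} [Fintype V] [DecidableEq V]
    (f : Finset V → ℝ)
    (hmono : ∀ A B : Finset V, A ⊆ B → f A ≤ f B)
    (hnorm : f ∅ = 0)
    (w : V → ℝ) (hw : ∀ v, 0 < w v)
    (ε : ℝ) (hε0 : 0 < ε)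
    (τ : ℝ) (hτ : 0 < τ)
    (OPT : ℝ) (hOPTpos : 0 < OPT)
    (hτgt : f Finset.univ * ε / OPT < (1 + ε) * τ)
    (D : Finset V)
    (k : ℕ) (e : ℕ → V)
    (hdens : ∀ i < k,
      τ ≤ (f ((Finset.range (i + 1)).image e) - f ((Finset.range i).image e)) / w (e i)) :
    ∑ i ∈ (Finset.range k).filter (fun i => e i ∉ D), w (e i) < ((1 + ε) / ε) * OPT := by
  have hweight : τ * ∑ i ∈ range k, w (e i) ≤ f univ :=
    (mul_sum_weight_le_of_marginal_density hnorm hw hdens).trans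
      (hmono _ _ (subset_univ _))
  have hfilter : ∑ i ∈ (range k).filter (fun i => e i ∉ D), w (e i)
      ≤ ∑ i ∈ range k, w (e i) :=
    sum_le_sum_of_subset_of_nonneg (filter_subset _ _) fun i _ _ => (hw (e i)).le
  have hτOPT : f univ * ε < (1 + ε) * τ * OPT := (div_lt_iff₀ hOPTpos).mp hτgt
  exact hfilter.trans_lt (lt_div_mul_of_mul_le_of_mul_lt hτ hε0 hweight hτOPT)

theorem stmt6 {V : Type*} [Fintype V] [DecidableEq V]
    (f : Finset V → ℝ)
    (hmono : ∀ A B : Finset V, A ⊆ B → f A ≤ f B)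
    (hsub : ∀ A B : Finset V, f A + f B ≥ f (A ∪ B) + f (A ∩ B))
    (hnorm : f ∅ = 0)
    (hV : 0 < f Finset.univ)
    (w : V → ℝ) (hw : ∀ v, 0 < w v)
    (ε : ℝ) (hε0 : 0 < ε) (hε1 : ε < 1/10)
    (τ : ℝ) (hτ : 0 < τ)
    (Sopt : Finset V) (hopt : f Sopt = f Finset.univ)
    (OPT : ℝ) (hOPT : OPT = ∑ v ∈ Sopt, w v) (hOPTpos : 0 < OPT)
    (hτle : τ ≤ f Finset.univ * ε / OPT)
    (hτgt : f Finset.univ * ε / OPT < (1 + ε) * τ)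
    (D : Finset V)
    (k : ℕ) (e : ℕ → V)
    (hinj : Set.InjOn e (Set.Iio k))
    (hdens : ∀ i < k,
      τ ≤ (f ((Finset.range (i + 1)).image e) - f ((Finset.range i).image e)) / w (e i)) :
    ∑ i ∈ (Finset.range k).filter (fun i => e i ∉ D), w (e i) < ((1 + ε) / ε) * OPT :=
  stmt6_general f hmono hnorm w hw ε hε0 τ hτ OPT hOPTpos hτgt D k e hdens
end

section
/- Let f be monotone submodular normalized, w : V → ℝ with weights of all elements of a bucket B in [(1+ε)^k, (1+ε)^{k+1}), and τ' > 0. Suppose we process a sequence e₁,...,e_m of distinct elements of B, adding e_i to a growing set G (initialized to G₀) whenever d(e_i|G) ≥ τ'. If each e_i is added with probability at least 1 - 2ε (over the randomness of the sequence), then the expected marginal gain satisfies E[f(G_final) - f(G₀)] ≥ (1-2ε)·m·τ'·(1+ε)^k. -/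
/-!
Each step of the threshold greedy pass either keeps `G` (and `f` cannot decrease, by monotonicity)
or adds an element `x` of density at least `τ'`, gaining at least `τ' * w x ≥ τ' * (1 + ε) ^ k`.
Since the second case has probability at least `1 - 2 * ε`, every step has expected gain at least
`(1 - 2 * ε) * τ' * (1 + ε) ^ k`, and the expected total gain telescopes over the `m` steps.
-/

open Finset

section ThresholdStep

variable {V : Type*} [DecidableEq V]

noncomputable def thresholdStep (f : Finset V → ℝ) (w : V → ℝ) (τ : ℝ) (x : V) (G : Finset V) :
    Finset V :=
  if τ ≤ (f (insert x G) - f G) / w x then insert x G else G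

theorem le_thresholdStep {f : Finset V → ℝ} (hf : Monotone f) (w : V → ℝ) (τ : ℝ) (x : V)
    (G : Finset V) : f G ≤ f (thresholdStep f w τ x G) := by
  unfold thresholdStep
  split_ifs
  · exact hf (subset_insert x G)
  · exact le_rfl

theorem mul_le_thresholdStep_sub {f : Finset V → ℝ} {w : V → ℝ} {τ c : ℝ} {x : V}
    {G : Finset V} (hw : 0 < w x) (hτ : 0 ≤ τ) (hc : c ≤ w x)
    (hx : τ ≤ (f (insert x G) - f G) / w x) :
    τ * c ≤ f (thresholdStep f w τ x G) - f G := by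
  rw [thresholdStep, if_pos hx]
  calc τ * c ≤ τ * w x := mul_le_mul_of_nonneg_left hc hτ
    _ ≤ f (insert x G) - f G := (le_div_iff₀ hw).mp hx

end ThresholdStep

section Expectation

variable {Ω : Type*} [Fintype Ω] (p : Ω → ℝ)

theorem mul_le_sum_mul_of_le_on {X : Ω → ℝ} (hp : ∀ ω, 0 ≤ p ω) (hX : ∀ ω, 0 ≤ X ω)
    (S : Finset Ω) {a c : ℝ} (hc : 0 ≤ c) (ha : a ≤ ∑ ω ∈ S, p ω) (hXS : ∀ ω ∈ S, c ≤ X ω) :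
    a * c ≤ ∑ ω, p ω * X ω :=
  calc a * c ≤ (∑ ω ∈ S, p ω) * c := mul_le_mul_of_nonneg_right ha hc
    _ = ∑ ω ∈ S, p ω * c := sum_mul _ _ _
    _ ≤ ∑ ω ∈ S, p ω * X ω := sum_le_sum fun ω hω => mul_le_mul_of_nonneg_left (hXS ω hω) (hp ω)
    _ ≤ ∑ ω, p ω * X ω :=
      sum_le_sum_of_subset_of_nonneg (subset_univ S) fun ω _ _ => mul_nonneg (hp ω) (hX ω)

theorem mul_le_sum_mul_sub_of_forall_le (X : ℕ → Ω → ℝ) (m : ℕ) {b : ℝ}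
    (hb : ∀ i < m, b ≤ ∑ ω, p ω * (X (i + 1) ω - X i ω)) :
    m * b ≤ ∑ ω, p ω * (X m ω - X 0 ω) := by
  have htelescope : ∑ ω, p ω * (X m ω - X 0 ω) =
      ∑ i ∈ range m, ∑ ω, p ω * (X (i + 1) ω - X i ω) := by
    rw [sum_comm]
    exact sum_congr rfl fun ω _ => by rw [← mul_sum, sum_range_sub fun i => X i ω]
  have := card_nsmul_le_sum (range m) _ b fun i hi => hb i (mem_range.mp hi)
  rwa [card_range, nsmul_eq_mul, ← htelescope] at this

end Expectation

theorem stmt18_general {V : Type*} [DecidableEq V]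
    {Ω : Type*} [Fintype Ω]
    (p : Ω → ℝ) (hp : ∀ ω, 0 ≤ p ω)
    (f : Finset V → ℝ)
    (hmono : ∀ A B : Finset V, A ⊆ B → f A ≤ f B)
    (w : V → ℝ) (hw : ∀ v, 0 < w v)
    (ε τ' : ℝ) (hε0 : 0 < ε) (hτ : 0 < τ')
    (k : ℤ) (B : Finset V)
    (hwB : ∀ v ∈ B, (1 + ε) ^ k ≤ w v ∧ w v < (1 + ε) ^ (k + 1))
    (m : ℕ) (e : Fin m → Ω → V)
    (heB : ∀ i ω, e i ω ∈ B)
    (G₀ : Finset V) (G : ℕ → Ω → Finset V)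
    (hG0 : ∀ ω, G 0 ω = G₀)
    (hGs : ∀ ω, ∀ i : Fin m, G (i.val + 1) ω =
      if τ' ≤ (f (insert (e i ω) (G i.val ω)) - f (G i.val ω)) / w (e i ω)
      then insert (e i ω) (G i.val ω) else G i.val ω)
    (hadd : ∀ i : Fin m,
      1 - 2 * ε ≤ ∑ ω ∈ Finset.univ.filter
        (fun ω => τ' ≤ (f (insert (e i ω) (G i.val ω)) - f (G i.val ω)) / w (e i ω)), p ω) :
    (1 - 2 * ε) * m * τ' * (1 + ε) ^ k ≤ ∑ ω, p ω * (f (G m ω) - f G₀) := by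
  have hc : 0 ≤ τ' * (1 + ε) ^ k := mul_nonneg hτ.le (zpow_pos (by linarith) k).le
  have hstep : ∀ i < m, (1 - 2 * ε) * (τ' * (1 + ε) ^ k) ≤
      ∑ ω, p ω * (f (G (i + 1) ω) - f (G i ω)) := by
    intro i hi
    let j : Fin m := ⟨i, hi⟩
    refine mul_le_sum_mul_of_le_on p hp (fun ω => ?_) _ hc (hadd j) fun ω hω => ?_
    · rw [hGs ω j]
      exact sub_nonneg.mpr (le_thresholdStep hmono w τ' _ _)
    · rw [hGs ω j]
      exact mul_le_thresholdStep_sub (hw _) hτ.le (hwB _ (heB j ω)).1 (mem_filter.mp hω).2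
  calc (1 - 2 * ε) * m * τ' * (1 + ε) ^ k = m * ((1 - 2 * ε) * (τ' * (1 + ε) ^ k)) := by ring
    _ ≤ ∑ ω, p ω * (f (G m ω) - f (G 0 ω)) :=
      mul_le_sum_mul_sub_of_forall_le p (fun i ω => f (G i ω)) m hstep
    _ = ∑ ω, p ω * (f (G m ω) - f G₀) := by simp only [hG0]

theorem stmt18 {V : Type*} [Fintype V] [DecidableEq V]
    {Ω : Type*} [Fintype Ω] [DecidableEq Ω]
    (p : Ω → ℝ) (hp : ∀ ω, 0 ≤ p ω) (hp1 : ∑ ω, p ω = 1)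
    (f : Finset V → ℝ)
    (hmono : ∀ A B : Finset V, A ⊆ B → f A ≤ f B)
    (hsub : ∀ A B : Finset V, f A + f B ≥ f (A ∪ B) + f (A ∩ B))
    (hnorm : f ∅ = 0)
    (w : V → ℝ) (hw : ∀ v, 0 < w v)
    (ε τ' : ℝ) (hε0 : 0 < ε) (hε1 : ε < 1/10) (hτ : 0 < τ')
    (k : ℤ) (B : Finset V)
    (hwB : ∀ v ∈ B, (1 + ε) ^ k ≤ w v ∧ w v < (1 + ε) ^ (k + 1))
    (m : ℕ) (e : Fin m → Ω → V)
    (heB : ∀ i ω, e i ω ∈ B)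
    (hinj : ∀ ω, Function.Injective (fun i => e i ω))
    (G₀ : Finset V) (G : ℕ → Ω → Finset V)
    (hG0 : ∀ ω, G 0 ω = G₀)
    (hGs : ∀ ω, ∀ i : Fin m, G (i.val + 1) ω =
      if τ' ≤ (f (insert (e i ω) (G i.val ω)) - f (G i.val ω)) / w (e i ω)
      then insert (e i ω) (G i.val ω) else G i.val ω)
    (hadd : ∀ i : Fin m,
      1 - 2 * ε ≤ ∑ ω ∈ Finset.univ.filter
        (fun ω => τ' ≤ (f (insert (e i ω) (G i.val ω)) - f (G i.val ω)) / w (e i ω)), p ω) :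
    (1 - 2 * ε) * m * τ' * (1 + ε) ^ k ≤ ∑ ω, p ω * (f (G m ω) - f G₀) :=
  stmt18_general p hp f hmono w hw ε τ' hε0 hτ k B hwB m e heB G₀ G hG0 hGs hadd
end
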